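/- For submodular f and any j with 1 ≤ j ≤ n and δ ∈ [0,1]: ∫_0^δ ( f(A_j(ℓ_j,θ)) − f(A_{j−1}(ℓ_j,θ)) ) dθ ≥ ∫_0^{min(α_j,δ)} ( f(A_{j−1}(θ) + v_j) − f(A_{j−1}(θ)) ) dθ. -/

import Mathlib

/-!
On `[0, min (x(v_j, ℓ_j), δ)]` the level set `A_j(ℓ_j, θ)` is `A_{j-1}(ℓ_j, θ) + v_j`, and
`A_{j-1}(ℓ_j, θ) ⊆ A_{j-1}(θ) ∌ v_j`, so submodularity (diminishing marginal gains) bounds the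
integrand on the right by the one on the left. Above `x(v_j, ℓ_j)` the two level sets on the left
coincide, so the rest of the left integral vanishes.
-/

open MeasureTheory Set

theorem intervalIntegrable_comp_of_measurable {α : Type*} [Finite α] (f : Set α → ℝ)
    {g : ℝ → Set α} (hg : Measurable g) (a b : ℝ) :
    IntervalIntegrable (fun θ => f (g θ)) volume a b := by
  have : IsFiniteMeasure (volume.restrict (uIoc a b)) :=
    isFiniteMeasure_restrict.2 measure_Ioc_lt_top.ne
  exact intervalIntegrable_iff.2 (Integrable.of_finite.comp_measurable hg)

theorem sub_le_sub_of_submodular {α : Type*} {f : Set α → ℝ}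
    (hsub : ∀ A B : Set α, f A + f B ≥ f (A ∩ B) + f (A ∪ B))
    {S T : Set α} {a : α} (hST : S ⊆ T) (ha : a ∉ T) :
    f (T ∪ {a}) - f T ≤ f (S ∪ {a}) - f S := by
  have h := hsub (S ∪ {a}) T
  rw [union_inter_distrib_right, inter_eq_left.2 hST, singleton_inter_eq_empty.2 ha, union_empty,
    union_right_comm, union_eq_right.2 hST] at h
  linarith

section LevelSet

variable {α : Type*} (t : Set α) (w : α → ℝ)

/-- `levelSet V_j (x · i) θ` is the paper's `A_j(i, θ)`. -/
def levelSet (θ : ℝ) : Set α := {v | v ∈ t ∧ θ ≤ w v}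

@[fun_prop]
theorem measurable_levelSet : Measurable (levelSet t w) := by
  unfold levelSet
  fun_prop

variable {t w}

theorem levelSet_union_singleton_of_le {a : α} {θ : ℝ} (h : θ ≤ w a) :
    levelSet (t ∪ {a}) w θ = levelSet t w θ ∪ {a} := by
  ext v
  simp only [levelSet, mem_union, mem_singleton_iff, mem_ofPred_eq]
  constructor
  · rintro ⟨hv | rfl, hθ⟩
    exacts [Or.inl ⟨hv, hθ⟩, Or.inr rfl]
  · rintro (⟨hv, hθ⟩ | rfl)
    exacts [⟨Or.inl hv, hθ⟩, ⟨Or.inr rfl, h⟩]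

theorem levelSet_union_singleton_of_lt {a : α} {θ : ℝ} (h : w a < θ) :
    levelSet (t ∪ {a}) w θ = levelSet t w θ := by
  ext v
  simp only [levelSet, mem_union, mem_singleton_iff, mem_ofPred_eq]
  constructor
  · rintro ⟨hv | rfl, hθ⟩
    exacts [⟨hv, hθ⟩, absurd hθ h.not_ge]
  · exact fun ⟨hv, hθ⟩ => ⟨Or.inl hv, hθ⟩

end LevelSet

theorem integral_sub_le_integral_levelSet_sub {α : Type*} [Finite α] {f : Set α → ℝ}
    (hsub : ∀ A B : Set α, f A + f B ≥ f (A ∩ B) + f (A ∪ B))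
    {s : Set α} {a : α} {w : α → ℝ} {U : ℝ → Set α} (hU : Measurable U)
    (hsU : ∀ θ, levelSet s w θ ⊆ U θ) (haU : ∀ θ, a ∉ U θ) (ha : 0 ≤ w a) {δ : ℝ} (hδ : 0 ≤ δ) :
    ∫ θ in (0:ℝ)..min (w a) δ, (f (U θ ∪ {a}) - f (U θ)) ≤
      ∫ θ in (0:ℝ)..δ, (f (levelSet (s ∪ {a}) w θ) - f (levelSet s w θ)) := by
  set m := min (w a) δ
  have hint (c d : ℝ) := (intervalIntegrable_comp_of_measurable f
    (measurable_levelSet (s ∪ {a}) w) c d).sub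
    (intervalIntegrable_comp_of_measurable f (measurable_levelSet s w) c d)
  have hUa : Measurable fun θ => U θ ∪ {a} :=
    measurable_set_iff.2 fun v => (measurable_set_iff.1 hU v).or measurable_const
  have htail : ∫ θ in m..δ, (f (levelSet (s ∪ {a}) w θ) - f (levelSet s w θ)) = 0 := by
    refine intervalIntegral.integral_zero_ae (Filter.Eventually.of_forall fun θ hθ => ?_)
    rw [uIoc_of_le (min_le_right _ _)] at hθ
    have hlt : w a < θ := (min_lt_iff.1 hθ.1).resolve_right hθ.2.not_gt
    rw [levelSet_union_singleton_of_lt hlt, sub_self]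
  calc ∫ θ in (0:ℝ)..m, (f (U θ ∪ {a}) - f (U θ))
      ≤ ∫ θ in (0:ℝ)..m, (f (levelSet (s ∪ {a}) w θ) - f (levelSet s w θ)) := by
        refine intervalIntegral.integral_mono_on (le_min ha hδ)
          ((intervalIntegrable_comp_of_measurable f hUa 0 m).sub
            (intervalIntegrable_comp_of_measurable f hU 0 m)) (hint 0 m) fun θ hθ => ?_
        rw [levelSet_union_singleton_of_le (hθ.2.trans (min_le_left _ _))]
        exact sub_le_sub_of_submodular hsub (hsU θ) (haU θ)
    _ = ∫ θ in (0:ℝ)..δ, (f (levelSet (s ∪ {a}) w θ) - f (levelSet s w θ)) := by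
        rw [← intervalIntegral.integral_add_adjacent_intervals (hint 0 m) (hint m δ), htail,
          add_zero]

/-- Vertices are `0`-indexed: the paper's `v_j` is `⟨j - 1, _⟩ : Fin n` and
`V_j = {v | v.val < j}`. -/
theorem charging_lemma_two_pointwise {n k : ℕ} (f : Set (Fin n) → ℝ)
    (hsub : ∀ A B : Set (Fin n), f A + f B ≥ f (A ∩ B) + f (A ∪ B))
    (x : Fin n → Fin k → ℝ)
    (hx0 : ∀ v i, 0 ≤ x v i)
    (δ : ℝ) (hδ : δ ∈ Set.Icc (0:ℝ) 1)
    (j : ℕ) (hj1 : 1 ≤ j) (hjn : j ≤ n)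
    (ℓ : Fin k) :
    (∫ θ in (0:ℝ)..δ,
        (f {v : Fin n | v.val < j ∧ θ ≤ x v ℓ}
          - f {v : Fin n | v.val < j - 1 ∧ θ ≤ x v ℓ})) ≥
      ∫ θ in (0:ℝ)..(min (x ⟨j - 1, by omega⟩ ℓ) δ),
        (f ({v : Fin n | v.val < j - 1 ∧ ∃ i : Fin k, θ ≤ x v i} ∪ {⟨j - 1, by omega⟩})
          - f {v : Fin n | v.val < j - 1 ∧ ∃ i : Fin k, θ ≤ x v i}) := by
  have hprefix : {v : Fin n | v.val < j - 1} ∪ {⟨j - 1, by omega⟩} = {v : Fin n | v.val < j} := by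
    ext v
    simp only [mem_union, mem_singleton_iff, mem_ofPred_eq, Fin.ext_iff]
    omega
  have h := integral_sub_le_integral_levelSet_sub hsub (s := {v : Fin n | v.val < j - 1})
    (a := ⟨j - 1, by omega⟩) (w := (x · ℓ))
    (U := fun θ => {v | v.val < j - 1 ∧ ∃ i, θ ≤ x v i}) (by fun_prop)
    (fun _ _ hv => ⟨hv.1, ℓ, hv.2⟩) (fun _ hv => lt_irrefl (j - 1) hv.1) (hx0 _ ℓ) hδ.1
  rwa [hprefix] at h
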